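/- arXiv:2306.16419 — 7 statements merged into one kernel-verified Lean document; each statement's English description precedes it below -/
import Mathlib

section
/- Let Θ ⊆ ℝ be an interval, let g : Θ → ℝ, and let θ* ∈ Θ satisfy g(θ) > 0 for all θ ∈ Θ with θ < θ*, g(θ*) = 0, and g(θ) < 0 for all θ ∈ Θ with θ > θ*. Suppose U : Θ × Θ → ℝ is jointly continuous and, for every s ∈ Θ, the map θ ↦ U(θ|s) is a U-function for g at s. Let (θ⁽ᵗ⁾)_{t≥0} be a sequence in Θ with θ⁽⁰⁾ ∈ Θ arbitrary and U(θ⁽ᵗ⁺¹⁾|θ⁽ᵗ⁾) = 0 for every t ≥ 0. Then the sequence (θ⁽ᵗ⁾) is monotone (nondecreasing if θ⁽⁰⁾ ≤ θ*, nonincreasing if θ⁽⁰⁾ ≥ θ*), satisfies |θ⁽ᵗ⁺¹⁾ − θ*| ≤ |θ⁽ᵗ⁾ − θ*| for all t with strict inequality whenever θ⁽ᵗ⁾ ≠ θ*, and converges to θ*. -/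
/-- `U` is a U-function for `g` at `s` on the domain `Θ`. -/
def IsUFunction (Θ : Set ℝ) (g : ℝ → ℝ) (U : ℝ → ℝ) (s : ℝ) : Prop :=
  (∀ θ ∈ Θ, θ ≤ s → g θ ≤ U θ) ∧ U s = g s ∧ (∀ θ ∈ Θ, s ≤ θ → U θ ≤ g θ)

/-- Strongly stable convergence of the Upper-crossing/Solution (US) algorithm. -/
theorem us_strongly_stable_convergence
    (Θ : Set ℝ) (hΘ : Θ.OrdConnected) (g : ℝ → ℝ) (θstar : ℝ) (hθstar : θstar ∈ Θ)
    (hpos : ∀ θ ∈ Θ, θ < θstar → 0 < g θ)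
    (hzero : g θstar = 0)
    (hneg : ∀ θ ∈ Θ, θstar < θ → g θ < 0)
    (U : ℝ → ℝ → ℝ)
    (hUcont : ContinuousOn (fun p : ℝ × ℝ => U p.1 p.2) (Θ ×ˢ Θ))
    (hU : ∀ s ∈ Θ, IsUFunction Θ g (fun θ => U θ s) s)
    (θ : ℕ → ℝ) (hθmem : ∀ t, θ t ∈ Θ)
    (hiter : ∀ t, U (θ (t + 1)) (θ t) = 0) :
    ((θ 0 ≤ θstar → Monotone θ) ∧ (θstar ≤ θ 0 → Antitone θ)) ∧
    (∀ t, |θ (t + 1) - θstar| ≤ |θ t - θstar|) ∧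
    (∀ t, θ t ≠ θstar → |θ (t + 1) - θstar| < |θ t - θstar|) ∧
    Filter.Tendsto θ Filter.atTop (nhds θstar) := by
  -- key one-step facts
  have key_le : ∀ s ∈ Θ, ∀ x ∈ Θ, U x s = 0 → s ≤ θstar → s ≤ x ∧ x ≤ θstar := by
    intro s hs x hx hUx hsle
    obtain ⟨h1, h2, h3⟩ := hU s hs
    constructor
    · by_contra h
      push_neg at h
      have hgx : 0 < g x := hpos x hx (lt_of_lt_of_le h hsle)
      have := h1 x hx h.le
      simp only at this
      linarith
    · by_contra h
      push_neg at h
      have hgx : g x < 0 := hneg x hx h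
      have := h3 x hx (le_trans hsle h.le)
      simp only at this
      linarith
  have key_ge : ∀ s ∈ Θ, ∀ x ∈ Θ, U x s = 0 → θstar ≤ s → x ≤ s ∧ θstar ≤ x := by
    intro s hs x hx hUx hsle
    obtain ⟨h1, h2, h3⟩ := hU s hs
    constructor
    · by_contra h
      push_neg at h
      have hgx : g x < 0 := hneg x hx (lt_of_le_of_lt hsle h)
      have := h3 x hx h.le
      simp only at this
      linarith
    · by_contra h
      push_neg at h
      have hgx : 0 < g x := hpos x hx h
      have := h1 x hx (le_trans h.le hsle)
      simp only at this
      linarith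
  have key_lt : ∀ s ∈ Θ, ∀ x ∈ Θ, U x s = 0 → s < θstar → s < x := by
    intro s hs x hx hUx hsl
    rcases lt_or_eq_of_le ((key_le s hs x hx hUx hsl.le).1) with h | h
    · exact h
    · exfalso
      obtain ⟨h1, h2, h3⟩ := hU s hs
      have hss : U s s = g s := h2
      rw [← h] at hUx
      rw [hUx] at hss
      have := hpos s hs hsl
      linarith
  have key_gt : ∀ s ∈ Θ, ∀ x ∈ Θ, U x s = 0 → θstar < s → x < s := by
    intro s hs x hx hUx hsl
    rcases lt_or_eq_of_le ((key_ge s hs x hx hUx hsl.le).1) with h | h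
    · exact h
    · exfalso
      obtain ⟨h1, h2, h3⟩ := hU s hs
      have hx2 : U s s = g s := h2
      rw [h] at hUx
      have := hneg s hs hsl
      rw [hUx] at hx2
      linarith
  -- monotonicity cases
  have hle_all : θ 0 ≤ θstar → ∀ t, θ t ≤ θstar := by
    intro h0 t
    induction t with
    | zero => exact h0
    | succ n ih => exact (key_le (θ n) (hθmem n) (θ (n+1)) (hθmem (n+1)) (hiter n) ih).2
  have hge_all : θstar ≤ θ 0 → ∀ t, θstar ≤ θ t := by
    intro h0 t
    induction t with
    | zero => exact h0
    | succ n ih => exact (key_ge (θ n) (hθmem n) (θ (n+1)) (hθmem (n+1)) (hiter n) ih).2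
  have hmono : θ 0 ≤ θstar → Monotone θ := by
    intro h0
    exact monotone_nat_of_le_succ fun t =>
      (key_le (θ t) (hθmem t) (θ (t+1)) (hθmem (t+1)) (hiter t) (hle_all h0 t)).1
  have hanti : θstar ≤ θ 0 → Antitone θ := by
    intro h0
    exact antitone_nat_of_succ_le fun t =>
      (key_ge (θ t) (hθmem t) (θ (t+1)) (hθmem (t+1)) (hiter t) (hge_all h0 t)).1
  refine ⟨⟨hmono, hanti⟩, ?_, ?_, ?_⟩
  · intro t
    rcases le_total (θ t) θstar with h | h
    · obtain ⟨h1, h2⟩ := key_le (θ t) (hθmem t) (θ (t+1)) (hθmem (t+1)) (hiter t) h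
      rw [abs_of_nonpos (by linarith), abs_of_nonpos (by linarith)]; linarith
    · obtain ⟨h1, h2⟩ := key_ge (θ t) (hθmem t) (θ (t+1)) (hθmem (t+1)) (hiter t) h
      rw [abs_of_nonneg (by linarith), abs_of_nonneg (by linarith)]; linarith
  · intro t hne
    rcases lt_or_gt_of_ne hne with h | h
    · obtain ⟨h1, h2⟩ := key_le (θ t) (hθmem t) (θ (t+1)) (hθmem (t+1)) (hiter t) h.le
      have h3 := key_lt (θ t) (hθmem t) (θ (t+1)) (hθmem (t+1)) (hiter t) h
      rw [abs_of_nonpos (by linarith), abs_of_nonpos (by linarith)]; linarith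
    · obtain ⟨h1, h2⟩ := key_ge (θ t) (hθmem t) (θ (t+1)) (hθmem (t+1)) (hiter t) h.le
      have h3 := key_gt (θ t) (hθmem t) (θ (t+1)) (hθmem (t+1)) (hiter t) h
      rw [abs_of_nonneg (by linarith), abs_of_nonneg (by linarith)]; linarith
  -- convergence
  · have fixed : ∀ L ∈ Θ, Filter.Tendsto θ Filter.atTop (nhds L) → U L L = 0 := by
      intro L hL htend
      have hpair : Filter.Tendsto (fun t => (θ (t+1), θ t)) Filter.atTop
          (nhdsWithin (L, L) (Θ ×ˢ Θ)) := by
        rw [tendsto_nhdsWithin_iff]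
        constructor
        · exact (htend.comp (Filter.tendsto_add_atTop_nat 1)).prodMk_nhds htend
        · exact Filter.Eventually.of_forall fun t => ⟨hθmem (t+1), hθmem t⟩
      have h4 : Filter.Tendsto (fun t => U (θ (t+1)) (θ t)) Filter.atTop (nhds (U L L)) :=
        (hUcont (L, L) ⟨hL, hL⟩).tendsto.comp hpair
      have hconst : (fun t => U (θ (t+1)) (θ t)) = fun _ => (0 : ℝ) := funext hiter
      rw [hconst] at h4
      exact (tendsto_nhds_unique tendsto_const_nhds h4).symm
    rcases le_total (θ 0) θstar with h0 | h0
    · have hm := hmono h0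
      have hb : BddAbove (Set.range θ) := ⟨θstar, by rintro _ ⟨t, rfl⟩; exact hle_all h0 t⟩
      have htend := tendsto_atTop_ciSup hm hb
      set L := ⨆ n, θ n with hLdef
      have hL1 : θ 0 ≤ L := le_ciSup hb 0
      have hL2 : L ≤ θstar := ciSup_le (hle_all h0)
      have hLmem : L ∈ Θ := hΘ.out (hθmem 0) hθstar ⟨hL1, hL2⟩
      have hULL := fixed L hLmem htend
      have hgL : U L L = g L := (hU L hLmem).2.1
      have : L = θstar := by
        by_contra hne
        have hlt : L < θstar := lt_of_le_of_ne hL2 hne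
        have := hpos L hLmem hlt
        rw [hULL] at hgL; linarith
      rwa [this] at htend
    · have hm := hanti h0
      have hb : BddBelow (Set.range θ) := ⟨θstar, by rintro _ ⟨t, rfl⟩; exact hge_all h0 t⟩
      have htend := tendsto_atTop_ciInf hm hb
      set L := ⨅ n, θ n with hLdef
      have hL1 : L ≤ θ 0 := ciInf_le hb 0
      have hL2 : θstar ≤ L := le_ciInf (hge_all h0)
      have hLmem : L ∈ Θ := hΘ.out hθstar (hθmem 0) ⟨hL2, hL1⟩
      have hULL := fixed L hLmem htend
      have hgL : U L L = g L := (hU L hLmem).2.1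
      have : L = θstar := by
        by_contra hne
        have hlt : θstar < L := lt_of_le_of_ne hL2 (Ne.symm hne)
        have := hneg L hLmem hlt
        rw [hULL] at hgL; linarith
      rwa [this] at htend
end

section
/- Let Θ ⊆ ℝ be an interval, let g : Θ → ℝ, and let θ* ∈ Θ satisfy g(θ) > 0 for all θ ∈ Θ with θ < θ*, g(θ*) = 0, and g(θ) < 0 for all θ ∈ Θ with θ > θ*. Let s ∈ Θ and let θ ↦ U(θ|s) be a U-function for g at s. If s < θ*, then every θ' ∈ Θ with U(θ'|s) = 0 satisfies s < θ' ≤ θ*; symmetrically, if s > θ*, then every θ' ∈ Θ with U(θ'|s) = 0 satisfies θ* ≤ θ' < s. -/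
/-- Bracketing property of the roots of a U-equation: the key step in the proof of
strongly stable convergence of the US algorithm. -/
theorem us_bracketing
    (Θ : Set ℝ) (hΘ : Θ.OrdConnected) (g : ℝ → ℝ) (θstar : ℝ) (hθstar : θstar ∈ Θ)
    (hpos : ∀ θ ∈ Θ, θ < θstar → 0 < g θ)
    (hzero : g θstar = 0)
    (hneg : ∀ θ ∈ Θ, θstar < θ → g θ < 0)
    (s : ℝ) (hs : s ∈ Θ) (U : ℝ → ℝ)
    (hU : IsUFunction Θ g U s) :
    (s < θstar → ∀ θ' ∈ Θ, U θ' = 0 → s < θ' ∧ θ' ≤ θstar) ∧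
    (θstar < s → ∀ θ' ∈ Θ, U θ' = 0 → θstar ≤ θ' ∧ θ' < s) := by
  obtain ⟨hU1, hU2, hU3⟩ := hU
  constructor
  · intro hsθ θ' hθ' hroot
    constructor
    · by_contra h
      push_neg at h
      have hg : 0 < g θ' := hpos θ' hθ' (lt_of_le_of_lt h hsθ)
      have := hU1 θ' hθ' h
      linarith [hroot ▸ this]
    · by_contra h
      push_neg at h
      have hg : g θ' < 0 := hneg θ' hθ' h
      have := hU3 θ' hθ' (le_of_lt (lt_trans hsθ h))
      linarith [hroot ▸ this]
  · intro hθs θ' hθ' hroot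
    constructor
    · by_contra h
      push_neg at h
      have hg : 0 < g θ' := hpos θ' hθ' h
      have := hU1 θ' hθ' (le_of_lt (lt_trans h hθs))
      linarith [hroot ▸ this]
    · by_contra h
      push_neg at h
      have hg : g θ' < 0 := hneg θ' hθ' (lt_of_lt_of_le hθs h)
      have := hU3 θ' hθ' h
      linarith [hroot ▸ this]
end

section
/- Let Θ ⊆ ℝ be an interval, let l : Θ → ℝ be twice differentiable, and let b : Θ → ℝ be continuous with l''(θ) ≥ b(θ) for all θ ∈ Θ (b is a second-derivative lower-bound function, SeLF, for l). Let θ̂ ∈ Θ satisfy l'(θ) > 0 for all θ < θ̂, l'(θ̂) = 0, and l'(θ) < 0 for all θ > θ̂ (so θ̂ is the unique maximizer of l). Let (θ⁽ᵗ⁾)_{t≥0} be a sequence in Θ with θ⁽⁰⁾ ∈ Θ arbitrary such that for each t, l'(θ⁽ᵗ⁾) + ∫_{θ⁽ᵗ⁾}^{θ⁽ᵗ⁺¹⁾} b(z) dz = 0. Then the sequence (θ⁽ᵗ⁾) is monotone (nondecreasing if θ⁽⁰⁾ ≤ θ̂, nonincreasing if θ⁽⁰⁾ ≥ θ̂), satisfies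 |θ⁽ᵗ⁺¹⁾ − θ̂| ≤ |θ⁽ᵗ⁾ − θ̂| with strict inequality whenever θ⁽ᵗ⁾ ≠ θ̂, and converges to θ̂. -/
open intervalIntegral

/-- Monotonicity of `x ↦ l' x - ∫ a..x b` on a segment of `Θ`. -/
lemma self_aux_mono (Θ : Set ℝ) (hΘ : Θ.OrdConnected) (l' l'' b : ℝ → ℝ)
    (hl' : ∀ θ ∈ Θ, HasDerivAt l' (l'' θ) θ)
    (hb : ContinuousOn b Θ)
    (hself : ∀ θ ∈ Θ, b θ ≤ l'' θ) {a c : ℝ} (ha : a ∈ Θ) (hc : c ∈ Θ) :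
    MonotoneOn (fun x => l' x - ∫ z in a..x, b z) (Set.uIcc a c) := by
  have hsub : Set.uIcc a c ⊆ Θ := hΘ.uIcc_subset ha hc
  have hbint : IntervalIntegrable b MeasureTheory.volume a c :=
    (hb.mono hsub).intervalIntegrable
  have hderiv : ∀ x ∈ interior (Set.uIcc a c),
      HasDerivAt (fun x => l' x - ∫ z in a..x, b z) (l'' x - b x) x := by
    intro x hx
    have hxΘ : x ∈ interior Θ := interior_mono hsub hx
    have hxmem : x ∈ Set.uIcc a c := interior_subset hx
    have hcb : ContinuousAt b x :=
      (hb x (hsub hxmem)).continuousAt (mem_interior_iff_mem_nhds.1 hxΘ)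
    have hmeas : StronglyMeasurableAtFilter b (nhds x) :=
      (hb.mono interior_subset).stronglyMeasurableAtFilter isOpen_interior _ hxΘ
    have hint : IntervalIntegrable b MeasureTheory.volume a x :=
      (hb.mono (hΘ.uIcc_subset ha (hsub hxmem))).intervalIntegrable
    exact (hl' x (hsub hxmem)).sub (integral_hasDerivAt_right hint hmeas hcb)
  apply monotoneOn_of_deriv_nonneg (convex_uIcc a c)
  · refine ContinuousOn.sub ?_ (continuousOn_primitive_interval' hbint Set.left_mem_uIcc)
    intro x hx
    exact ((hl' x (hsub hx)).continuousAt).continuousWithinAt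
  · exact fun x hx => ((hderiv x hx).differentiableAt).differentiableWithinAt
  · intro x hx
    rw [(hderiv x hx).deriv]
    have : x ∈ Θ := hsub (interior_subset hx)
    linarith [hself x this]

/-- One step of the SeLF iteration. -/
lemma self_aux_step (Θ : Set ℝ) (hΘ : Θ.OrdConnected) (l' l'' b : ℝ → ℝ)
    (hl' : ∀ θ ∈ Θ, HasDerivAt l' (l'' θ) θ)
    (hb : ContinuousOn b Θ)
    (hself : ∀ θ ∈ Θ, b θ ≤ l'' θ)
    (θhat : ℝ) (hθhat : θhat ∈ Θ)
    (hpos : ∀ θ ∈ Θ, θ < θhat → 0 < l' θ)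
    (hzero : l' θhat = 0)
    (hneg : ∀ θ ∈ Θ, θhat < θ → l' θ < 0)
    {a c : ℝ} (ha : a ∈ Θ) (hc : c ∈ Θ)
    (heq : l' a + ∫ z in a..c, b z = 0) :
    (a < θhat → a < c ∧ c ≤ θhat) ∧ (a = θhat → c = θhat) ∧
      (θhat < a → θhat ≤ c ∧ c < a) := by
  have hmono := self_aux_mono Θ hΘ l' l'' b hl' hb hself ha hc
  have hmem_a : a ∈ Set.uIcc a c := Set.left_mem_uIcc
  have hmem_c : c ∈ Set.uIcc a c := Set.right_mem_uIcc
  have hzero_int : (∫ z in a..a, b z) = 0 := integral_same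
  -- right inequality: if a ≤ c then l' a + ∫ ≤ l' c, i.e. 0 ≤ l' c
  have hR : a ≤ c → 0 ≤ l' c := by
    intro hac
    have := hmono hmem_a hmem_c hac
    simp only [hzero_int, sub_zero] at this
    linarith
  -- left inequality: if c ≤ a then l' c ≤ l' a + ∫ = 0
  have hL : c ≤ a → l' c ≤ 0 := by
    intro hca
    have := hmono hmem_c hmem_a hca
    simp only [hzero_int, sub_zero] at this
    linarith
  refine ⟨?_, ?_, ?_⟩
  · intro haθ
    have h1 : a < c := by
      by_contra h
      push_neg at h
      exact absurd (hpos c hc (lt_of_le_of_lt h haθ)) (not_lt.2 (hL h))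
    have h2 : c ≤ θhat := by
      by_contra h
      push_neg at h
      exact absurd (hR h1.le) (not_le.2 (hneg c hc h))
    exact ⟨h1, h2⟩
  · intro haθ
    rcases lt_trichotomy c θhat with h | h | h
    · exact absurd (hL (haθ ▸ h.le)) (not_le.2 (hpos c hc h))
    · exact h
    · exact absurd (hR (haθ ▸ h.le)) (not_le.2 (hneg c hc h))
  · intro haθ
    have h1 : c < a := by
      by_contra h
      push_neg at h
      exact absurd (hR h) (not_le.2 (hneg c hc (lt_of_lt_of_le haθ h)))
    have h2 : θhat ≤ c := by
      by_contra h
      push_neg at h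
      exact absurd (hpos c hc h) (not_lt.2 (hL h1.le))
    exact ⟨h2, h1⟩

/-- Strongly stable convergence of the SeLF (second-derivative lower-bound function)
algorithm: the iterates `θ⁽ᵗ⁺¹⁾ = sol{θ : l'(θ⁽ᵗ⁾) + ∫_{θ⁽ᵗ⁾}^{θ} b(z) dz = 0}`
converge monotonically and stably to the unique maximizer `θ̂` of `l`. -/
theorem self_strongly_stable_convergence
    (Θ : Set ℝ) (hΘ : Θ.OrdConnected) (l l' l'' b : ℝ → ℝ)
    (hl : ∀ θ ∈ Θ, HasDerivAt l (l' θ) θ)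
    (hl' : ∀ θ ∈ Θ, HasDerivAt l' (l'' θ) θ)
    (hb : ContinuousOn b Θ)
    (hself : ∀ θ ∈ Θ, b θ ≤ l'' θ)
    (θhat : ℝ) (hθhat : θhat ∈ Θ)
    (hpos : ∀ θ ∈ Θ, θ < θhat → 0 < l' θ)
    (hzero : l' θhat = 0)
    (hneg : ∀ θ ∈ Θ, θhat < θ → l' θ < 0)
    (θ : ℕ → ℝ) (hθmem : ∀ t, θ t ∈ Θ)
    (hiter : ∀ t, l' (θ t) + ∫ z in θ t..θ (t + 1), b z = 0) :
    ((θ 0 ≤ θhat → Monotone θ) ∧ (θhat ≤ θ 0 → Antitone θ)) ∧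
    (∀ t, |θ (t + 1) - θhat| ≤ |θ t - θhat|) ∧
    (∀ t, θ t ≠ θhat → |θ (t + 1) - θhat| < |θ t - θhat|) ∧
    Filter.Tendsto θ Filter.atTop (nhds θhat) := by
  have step := fun t => self_aux_step Θ hΘ l' l'' b hl' hb hself θhat hθhat hpos hzero hneg
    (hθmem t) (hθmem (t + 1)) (hiter t)
  -- upper/lower invariants
  have hub : θ 0 ≤ θhat → ∀ t, θ t ≤ θhat := by
    intro h0 t
    induction t with
    | zero => exact h0
    | succ n ih =>
      rcases lt_or_eq_of_le ih with h | h
      · exact ((step n).1 h).2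
      · exact ((step n).2.1 h).le
  have hlb : θhat ≤ θ 0 → ∀ t, θhat ≤ θ t := by
    intro h0 t
    induction t with
    | zero => exact h0
    | succ n ih =>
      rcases lt_or_eq_of_le ih with h | h
      · exact ((step n).2.2 h).1
      · exact ((step n).2.1 h.symm).ge
  have hmonoθ : θ 0 ≤ θhat → Monotone θ := by
    intro h0
    apply monotone_nat_of_le_succ
    intro t
    rcases lt_or_eq_of_le (hub h0 t) with h | h
    · exact ((step t).1 h).1.le
    · exact le_of_eq (h.trans ((step t).2.1 h).symm)
  have hantiθ : θhat ≤ θ 0 → Antitone θ := by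
    intro h0
    apply antitone_nat_of_succ_le
    intro t
    rcases lt_or_eq_of_le (hlb h0 t) with h | h
    · exact ((step t).2.2 h).2.le
    · exact le_of_eq (((step t).2.1 h.symm).trans h)
  have hstab : ∀ t, θ t ≠ θhat → |θ (t + 1) - θhat| < |θ t - θhat| := by
    intro t ht
    rcases lt_trichotomy (θ t) θhat with h | h | h
    · obtain ⟨h1, h2⟩ := (step t).1 h
      rw [abs_of_nonpos (by linarith), abs_of_nonpos (by linarith)]
      linarith
    · exact absurd h ht
    · obtain ⟨h1, h2⟩ := (step t).2.2 h
      rw [abs_of_nonneg (by linarith), abs_of_nonneg (by linarith)]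
      linarith
  have hstab' : ∀ t, |θ (t + 1) - θhat| ≤ |θ t - θhat| := by
    intro t
    by_cases ht : θ t = θhat
    · rw [ht, (step t).2.1 ht]
    · exact (hstab t ht).le
  refine ⟨⟨hmonoθ, hantiθ⟩, hstab', hstab, ?_⟩
  -- convergence
  -- bound on b over the segment between θ 0 and θhat
  have hseg : Set.uIcc (θ 0) θhat ⊆ Θ := hΘ.uIcc_subset (hθmem 0) hθhat
  obtain ⟨M, hM⟩ := isCompact_uIcc.exists_bound_of_continuousOn (hb.mono hseg)
  have hmemIcc : ∀ t, θ t ∈ Set.uIcc (θ 0) θhat := by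
    intro t
    rcases le_total (θ 0) θhat with h0 | h0
    · rw [Set.uIcc_of_le h0]
      exact ⟨hmonoθ h0 (Nat.zero_le t), hub h0 t⟩
    · rw [Set.uIcc_of_ge h0]
      exact ⟨hlb h0 t, hantiθ h0 (Nat.zero_le t)⟩
  have key : ∀ L : ℝ, Filter.Tendsto θ Filter.atTop (nhds L) →
      L ∈ Set.uIcc (θ 0) θhat → L = θhat := by
    intro L hL hLmem
    have hLΘ : L ∈ Θ := hseg hLmem
    -- l' (θ t) → l' L
    have hc1 : Filter.Tendsto (fun t => l' (θ t)) Filter.atTop (nhds (l' L)) :=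
      ((hl' L hLΘ).continuousAt.tendsto).comp hL
    -- integral term → 0
    have hL1 : Filter.Tendsto (fun t => θ (t + 1)) Filter.atTop (nhds L) :=
      hL.comp (Filter.tendsto_add_atTop_nat 1)
    have hbound : ∀ t, ‖∫ z in θ t..θ (t + 1), b z‖ ≤ M * |θ (t + 1) - θ t| := by
      intro t
      apply intervalIntegral.norm_integral_le_of_norm_le_const
      intro x hx
      apply hM
      have hsub2 : Set.uIoc (θ t) (θ (t + 1)) ⊆ Set.uIcc (θ 0) θhat := by
        refine Set.Subset.trans Set.uIoc_subset_uIcc ?_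
        exact Set.uIcc_subset_uIcc (hmemIcc t) (hmemIcc (t + 1))
      exact hsub2 hx
    have hg0 : Filter.Tendsto (fun t => M * |θ (t + 1) - θ t|) Filter.atTop (nhds 0) := by
      have : Filter.Tendsto (fun t => θ (t + 1) - θ t) Filter.atTop (nhds (L - L)) :=
        hL1.sub hL
      rw [sub_self] at this
      have habs : Filter.Tendsto (fun t => |θ (t + 1) - θ t|) Filter.atTop (nhds 0) := by
        simpa using this.abs
      simpa using habs.const_mul M
    have hint0 : Filter.Tendsto (fun t => ∫ z in θ t..θ (t + 1), b z)
        Filter.atTop (nhds 0) := squeeze_zero_norm hbound hg0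
    have hc2 : Filter.Tendsto (fun t => l' (θ t)) Filter.atTop (nhds 0) := by
      have : (fun t => l' (θ t)) = fun t => -(∫ z in θ t..θ (t + 1), b z) := by
        funext t
        linarith [hiter t]
      rw [this]
      simpa using hint0.neg
    have hl'L : l' L = 0 := tendsto_nhds_unique hc1 hc2
    rcases lt_trichotomy L θhat with h | h | h
    · exact absurd hl'L (ne_of_gt (hpos L hLΘ h))
    · exact h
    · exact absurd hl'L (ne_of_lt (hneg L hLΘ h))
  rcases le_total (θ 0) θhat with h0 | h0
  · have hbdd : BddAbove (Set.range θ) := ⟨θhat, by rintro x ⟨t, rfl⟩; exact hub h0 t⟩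
    have hL := tendsto_atTop_ciSup (hmonoθ h0) hbdd
    have hLmem : (⨆ t, θ t) ∈ Set.uIcc (θ 0) θhat := by
      rw [Set.uIcc_of_le h0]
      exact ⟨le_ciSup hbdd 0, ciSup_le (hub h0)⟩
    rwa [key _ hL hLmem] at hL
  · have hbdd : BddBelow (Set.range θ) := ⟨θhat, by rintro x ⟨t, rfl⟩; exact hlb h0 t⟩
    have hL := tendsto_atTop_ciInf (hantiθ h0) hbdd
    have hLmem : (⨅ t, θ t) ∈ Set.uIcc (θ 0) θhat := by
      rw [Set.uIcc_of_ge h0]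
      exact ⟨le_ciInf (hlb h0), ciInf_le hbdd 0⟩
    rwa [key _ hL hLmem] at hL
end

section
/- For every real t > 0 and every real θ ≥ 0, e^{θ/2}(2t − θ) ≤ 2 e^{max(t−1, 0)}. -/
/-- For every real `t > 0` and `θ ≥ 0`, `e^{θ/2}(2t − θ) ≤ 2 e^{max(t−1, 0)}`. -/
theorem exp_half_mul_le (t θ : ℝ) (ht : 0 < t) (hθ : 0 ≤ θ) :
    Real.exp (θ / 2) * (2 * t - θ) ≤ 2 * Real.exp (max (t - 1) 0) := by
  have h1 : t - θ / 2 ≤ Real.exp (t - θ / 2 - 1) := by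
    have := Real.add_one_le_exp (t - θ / 2 - 1)
    linarith
  have h2 : Real.exp (θ / 2) * (2 * t - θ) ≤ 2 * Real.exp (t - 1) := by
    have := mul_le_mul_of_nonneg_left h1 (Real.exp_pos (θ / 2)).le
    rw [← Real.exp_add] at this
    have heq : θ / 2 + (t - θ / 2 - 1) = t - 1 := by ring
    rw [heq] at this
    nlinarith
  have h3 : Real.exp (t - 1) ≤ Real.exp (max (t - 1) 0) :=
    Real.exp_le_exp.mpr (le_max_left _ _)
  linarith
end

section
/- For every real t > 0 and every real θ with 0 ≤ θ < 2t, −e^{θ} ≥ −4 e^{2 max(t−1, 0)} / (2t − θ)²; equivalently, e^{θ}(2t − θ)² ≤ 4 e^{2 max(t−1, 0)}. -/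
/-- For every real `t > 0` and `0 ≤ θ < 2t`,
`−e^{θ} ≥ −4 e^{2 max(t−1, 0)} / (2t − θ)²`; equivalently,
`e^{θ}(2t − θ)² ≤ 4 e^{2 max(t−1, 0)}`. -/
theorem neg_exp_lower_bound (t θ : ℝ) (ht : 0 < t) (hθ : 0 ≤ θ) (hθ' : θ < 2 * t) :
    -4 * Real.exp (2 * max (t - 1) 0) / (2 * t - θ) ^ 2 ≤ -Real.exp θ ∧
    Real.exp θ * (2 * t - θ) ^ 2 ≤ 4 * Real.exp (2 * max (t - 1) 0) := by
  set s : ℝ := 2 * t - θ with hs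
  have hs0 : 0 < s := by simp [hs]; linarith
  clear_value s
  have key : Real.exp θ * s ^ 2 ≤ 4 * Real.exp (2 * max (t - 1) 0) := by
    rcases le_or_gt 1 t with h1 | h1
    · -- max = t - 1
      have hm : max (t - 1) 0 = t - 1 := max_eq_left (by linarith)
      rw [hm]
      -- s/2 ≤ exp (s/2 - 1)
      have h2 : s / 2 ≤ Real.exp (s / 2 - 1) := by
        have := Real.add_one_le_exp (s / 2 - 1)
        linarith
      have h3 : s ^ 2 ≤ 4 * Real.exp (s - 2) := by
        have := mul_le_mul h2 h2 (by positivity) (Real.exp_nonneg _)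
        rw [← Real.exp_add] at this
        calc s ^ 2 = 4 * (s / 2 * (s / 2)) := by ring
          _ ≤ 4 * Real.exp (s / 2 - 1 + (s / 2 - 1)) := by linarith
          _ = 4 * Real.exp (s - 2) := by ring_nf
      calc Real.exp θ * s ^ 2 ≤ Real.exp θ * (4 * Real.exp (s - 2)) := by
            have := Real.exp_pos θ; nlinarith
        _ = 4 * (Real.exp θ * Real.exp (s - 2)) := by ring
        _ = 4 * Real.exp (θ + (s - 2)) := by rw [← Real.exp_add]
        _ = 4 * Real.exp (2 * (t - 1)) := by
            congr 1; simp only [hs]; ring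
    · -- max = 0
      have hm : max (t - 1) 0 = 0 := max_eq_right (by linarith)
      rw [hm]
      have h2 : 1 - θ / 2 ≤ Real.exp (-(θ / 2)) := by
        have := Real.add_one_le_exp (-(θ / 2))
        linarith
      have h4 : s / 2 * Real.exp (θ / 2) ≤ 1 := by
        have hse : s / 2 ≤ 1 - θ / 2 := by simp [hs]; linarith
        calc s / 2 * Real.exp (θ / 2) ≤ Real.exp (-(θ / 2)) * Real.exp (θ / 2) := by
              have := Real.exp_pos (θ / 2)
              nlinarith
          _ = 1 := by rw [← Real.exp_add]; simp
      have h5 := mul_le_mul h4 h4 (by positivity) zero_le_one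
      rw [mul_one] at h5
      have : s / 2 * Real.exp (θ / 2) * (s / 2 * Real.exp (θ / 2)) =
          Real.exp θ * s ^ 2 / 4 := by
        rw [show Real.exp θ = Real.exp (θ / 2) * Real.exp (θ / 2) by
          rw [← Real.exp_add]; ring_nf]
        ring
      rw [this] at h5
      simp only [mul_zero, Real.exp_zero, mul_one]
      nlinarith [h5]
  refine ⟨?_, key⟩
  rw [neg_mul, neg_div, neg_le_neg_iff, le_div_iff₀ (by positivity)]
  linarith
end

section
/- Let y > 0, let γₜ > 0, and let γ be a real number with 0 < γ < 2γₜ. Then e^{γ y} y² ≤ 4 e^{2 max(γₜ y − 1, 0)} / (2γₜ − γ)². -/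
/-- For `y > 0`, `γₜ > 0` and `0 < γ < 2γₜ`,
`e^{γy} y² ≤ 4 e^{2 max(γₜ y − 1, 0)} / (2γₜ − γ)²`. -/
theorem exp_mul_sq_le_of_pos (y γt γ : ℝ) (hy : 0 < y) (hγt : 0 < γt)
    (hγ : 0 < γ) (hγ' : γ < 2 * γt) :
    Real.exp (γ * y) * y ^ 2 ≤
      4 * Real.exp (2 * max (γt * y - 1) 0) / (2 * γt - γ) ^ 2 := by
  have hδ : 0 < 2 * γt - γ := by linarith
  have h1 : (2 * γt - γ) * y / 2 ≤ Real.exp ((2 * γt - γ) * y / 2 - 1) := by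
    linarith [Real.add_one_le_exp ((2 * γt - γ) * y / 2 - 1)]
  have h2 : ((2 * γt - γ) * y / 2) ^ 2 ≤ Real.exp ((2 * γt - γ) * y - 2) := by
    calc ((2 * γt - γ) * y / 2) ^ 2 ≤ Real.exp ((2 * γt - γ) * y / 2 - 1) ^ 2 :=
          pow_le_pow_left₀ (by positivity) h1 2
      _ = Real.exp ((2 * γt - γ) * y - 2) := by
          rw [sq, ← Real.exp_add]; ring_nf
  have h3 : Real.exp (γ * y) * y ^ 2 ≤ 4 * Real.exp (2 * γt * y - 2) / (2 * γt - γ) ^ 2 := by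
    have hE : Real.exp (γ * y) * Real.exp ((2 * γt - γ) * y - 2) = Real.exp (2 * γt * y - 2) := by
      rw [← Real.exp_add]; ring_nf
    have := mul_le_mul_of_nonneg_left h2 (Real.exp_pos (γ * y)).le
    rw [hE] at this
    calc Real.exp (γ * y) * y ^ 2
        = (Real.exp (γ * y) * ((2 * γt - γ) * y / 2) ^ 2) * (4 / (2 * γt - γ) ^ 2) := by
          field_simp; ring
      _ ≤ Real.exp (2 * γt * y - 2) * (4 / (2 * γt - γ) ^ 2) := by
          apply mul_le_mul_of_nonneg_right this (by positivity)
      _ = 4 * Real.exp (2 * γt * y - 2) / (2 * γt - γ) ^ 2 := by ring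
  refine h3.trans ?_
  gcongr
  linarith [le_max_left (γt * y - 1) (0:ℝ)]
end

section
/- Let α > 0 and γ > 0, let γ₀ denote the Euler–Mascheroni constant, and set S₁ = ∑_{m=0}^{∞} (1/(m+1) − 1/(m + α/γ)) and S₂ = ∑_{m=0}^{∞} 1/(m + α/γ)². Then −1/γ² − (2α/γ³)(−γ₀ + S₁) − (α²/γ⁴) S₂ ≥ −2/γ² + 2αγ₀/γ³ − (2 + π²/6)·(α²/γ⁴). -/
open Real Filter Topology

/- With `x = α / γ`, the digamma-type series satisfy `S₁ ≤ x`, because its terms are dominated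
termwise by `x` times the telescoping series `∑ (1/(m+1) − 1/(m+2)) = 1`, and `S₂ ≤ 1/x² + π²/6`,
by splitting off the term `m = 0` and comparing the rest with `ζ(2)`. Multiplying by the positive
weights `2α/γ³` and `α²/γ⁴` gives the inequality. -/

theorem hasSum_sub_succ_of_antitone {f : ℕ → ℝ} {l : ℝ} (hf : Antitone f)
    (hl : Tendsto f atTop (𝓝 l)) : HasSum (fun n ↦ f n - f (n + 1)) (f 0 - l) := by
  rw [hasSum_iff_tendsto_nat_of_nonneg fun n ↦ sub_nonneg.2 (hf n.le_succ)]
  simp_rw [Finset.sum_range_sub']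
  exact tendsto_const_nhds.sub hl

theorem hasSum_one_div_succ_sub_one_div_succ_succ :
    HasSum (fun m : ℕ ↦ 1 / ((m : ℝ) + 1) - 1 / ((m : ℝ) + 2)) 1 := by
  have hanti : Antitone fun n : ℕ ↦ 1 / ((n : ℝ) + 1) := fun m n hmn ↦
    one_div_le_one_div_of_le (by positivity) (by gcongr)
  convert hasSum_sub_succ_of_antitone hanti tendsto_one_div_add_atTop_nhds_zero_nat using 1
  · ext m
    push_cast
    ring
  · norm_num

theorem one_div_add_one_sub_one_div_add_le {t x : ℝ} (ht : 0 ≤ t) (hx : 0 < x) :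
    1 / (t + 1) - 1 / (t + x) ≤ x * (1 / (t + 1) - 1 / (t + 2)) := by
  have hdiff : 1 / (t + 1) - 1 / (t + x) = (x - 1) / ((t + 1) * (t + x)) := by
    field_simp
    ring
  have htele : x * (1 / (t + 1) - 1 / (t + 2)) = x / ((t + 1) * (t + 2)) := by
    field_simp
    ring
  rw [hdiff, htele, div_le_div_iff₀ (by positivity) (by positivity)]
  nlinarith [sq_nonneg (x - 1)]

theorem tsum_one_div_succ_sub_one_div_add_le {x : ℝ} (hx : 0 < x) :
    ∑' m : ℕ, (1 / ((m : ℝ) + 1) - 1 / ((m : ℝ) + x)) ≤ x := by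
  have htele := hasSum_one_div_succ_sub_one_div_succ_succ.mul_left x
  rw [mul_one] at htele
  -- The series does converge, but a divergent one would have `tsum` equal to `0 < x` anyway.
  by_cases hs : Summable fun m : ℕ ↦ 1 / ((m : ℝ) + 1) - 1 / ((m : ℝ) + x)
  · exact hasSum_le (fun m ↦ one_div_add_one_sub_one_div_add_le m.cast_nonneg hx) hs.hasSum htele
  · rw [tsum_eq_zero_of_not_summable hs]
    exact hx.le

theorem hasSum_one_div_succ_sq : HasSum (fun m : ℕ ↦ 1 / ((m : ℝ) + 1) ^ 2) (π ^ 2 / 6) := by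
  simpa using (hasSum_nat_add_iff' 1).2 hasSum_zeta_two

theorem tsum_one_div_add_sq_le {x : ℝ} (hx : 0 < x) :
    ∑' m : ℕ, 1 / ((m : ℝ) + x) ^ 2 ≤ 1 / x ^ 2 + π ^ 2 / 6 := by
  have htail (m : ℕ) : 1 / (((m + 1 : ℕ) : ℝ) + x) ^ 2 ≤ 1 / ((m : ℝ) + 1) ^ 2 := by
    push_cast
    apply one_div_le_one_div_of_le (by positivity)
    exact pow_le_pow_left₀ (by positivity) (by linarith) 2
  have hs : Summable fun m : ℕ ↦ 1 / (((m + 1 : ℕ) : ℝ) + x) ^ 2 :=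
    hasSum_one_div_succ_sq.summable.of_nonneg_of_le (fun _ ↦ by positivity) htail
  rw [tsum_eq_zero_add' (f := fun m : ℕ ↦ 1 / ((m : ℝ) + x) ^ 2) hs, Nat.cast_zero, zero_add]
  exact add_le_add_right (hasSum_le htail hs.hasSum hasSum_one_div_succ_sq) _

/-- The deterministic part of the SeLF lower bound for `∂²l/∂γ²` in the generalized
Gamma log-likelihood: with `S₁ = ∑_{m=0}^∞ (1/(m+1) − 1/(m+α/γ))`,
`S₂ = ∑_{m=0}^∞ 1/(m+α/γ)²` and `γ₀` the Euler–Mascheroni constant,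
`−1/γ² − (2α/γ³)(−γ₀ + S₁) − (α²/γ⁴)S₂ ≥ −2/γ² + 2αγ₀/γ³ − (2 + π²/6)(α²/γ⁴)`. -/
theorem self_lower_bound_gamma_deterministic (α γ : ℝ) (hα : 0 < α) (hγ : 0 < γ) :
    -2 / γ ^ 2 + 2 * α * Real.eulerMascheroniConstant / γ ^ 3 -
        (2 + π ^ 2 / 6) * (α ^ 2 / γ ^ 4) ≤
      -1 / γ ^ 2 -
        (2 * α / γ ^ 3) *
          (-Real.eulerMascheroniConstant +
            ∑' m : ℕ, (1 / ((m : ℝ) + 1) - 1 / ((m : ℝ) + α / γ))) -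
        (α ^ 2 / γ ^ 4) * ∑' m : ℕ, 1 / ((m : ℝ) + α / γ) ^ 2 := by
  have hx : 0 < α / γ := div_pos hα hγ
  have hS₁ := mul_le_mul_of_nonneg_left (tsum_one_div_succ_sub_one_div_add_le hx)
    (by positivity : 0 ≤ 2 * α / γ ^ 3)
  have hS₂ := mul_le_mul_of_nonneg_left (tsum_one_div_add_sq_le hx)
    (by positivity : 0 ≤ α ^ 2 / γ ^ 4)
  have hweight : α ^ 2 / γ ^ 4 * (1 / (α / γ) ^ 2 + π ^ 2 / 6) =
      1 / γ ^ 2 + π ^ 2 / 6 * (α ^ 2 / γ ^ 4) := by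
    field_simp
  rw [hweight] at hS₂
  linear_combination hS₁ + hS₂
end
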